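/- arXiv:2102.05979 — 2 statements merged into one kernel-verified Lean document; each statement's English description precedes it below -/
import Mathlib

section
/- Let x ∈ E(τ) for some τ ≥ 2. Then for any ε > 0, for all sufficiently large real q, the interval [q, q^{τ+ε−1}] contains the denominator of some convergent (partial quotient) of the continued fraction expansion of x. -/
noncomputable section

/-- `x` is `τ`-well approximable: `x` is irrational and `|x - p/q| < 1/q^τ` has
infinitely many solutions `(p, q) ∈ ℤ × ℕ` (with `q ≥ 1`). -/
def WellApprox (τ x : ℝ) : Prop :=
  Irrational x ∧
    {pq : ℤ × ℕ | 0 < pq.2 ∧ |x - (pq.1 : ℝ) / (pq.2 : ℝ)| < 1 / (pq.2 : ℝ) ^ τ}.Infinite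

/-- The exact order `τ(x) = sup {τ : x ∈ W(τ)}`, as an extended real number. -/
def exactOrder (x : ℝ) : EReal :=
  sSup ((fun τ : ℝ => (τ : EReal)) '' {τ : ℝ | WellApprox τ x})

/-- `x ∈ E(τ)`: `x` is irrational with exact order exactly `τ`. -/
def MemExactE (τ x : ℝ) : Prop :=
  Irrational x ∧ exactOrder x = (τ : EReal)

/-!
Since `x ∉ W(τ + ε)`, only finitely many convergents `pₙ/qₙ` satisfy
`|x - pₙ/qₙ| < 1/qₙ^(τ+ε)`. As `|x - pₙ/qₙ| ≤ 1/(qₙ qₙ₊₁)`, this forces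
`qₙ₊₁ ≤ qₙ^(τ+ε-1)` for all large `n`. Given a large `q`, let `qₙ₊₁` be the first denominator
that is at least `q`; then `qₙ < q`, so `qₙ₊₁ ≤ qₙ^(τ+ε-1) ≤ q^(τ+ε-1)`.
-/

open Filter
open GenContFract (of)

namespace GenContFract

section

variable {K : Type*} [Field K] [LinearOrder K] [FloorRing K]

theorem exists_int_eq_of_contsAux (v : K) (n : ℕ) :
    (∃ z : ℤ, ((of v).contsAux n).a = z) ∧ ∃ z : ℤ, ((of v).contsAux n).b = z := by
  induction n using Nat.twoStepInduction with
  | zero => exact ⟨⟨1, by simp⟩, ⟨0, by simp⟩⟩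
  | one => exact ⟨⟨⌊v⌋, by simp⟩, ⟨1, by simp⟩⟩
  | more n ih₀ ih₁ =>
    cases hs : (of v).s.get? n with
    | none => rwa [contsAux_stable_step_of_terminated hs]
    | some gp =>
      obtain ⟨ha, b, hb⟩ := of_partNum_eq_one_and_exists_int_partDen_eq hs
      obtain ⟨⟨p₀, hp₀⟩, q₀, hq₀⟩ := ih₀
      obtain ⟨⟨p₁, hp₁⟩, q₁, hq₁⟩ := ih₁
      rw [contsAux_recurrence hs rfl rfl, ha, hb, hp₀, hp₁, hq₀, hq₁]
      exact ⟨⟨b * p₁ + p₀, by push_cast; ring⟩, ⟨b * q₁ + q₀, by push_cast; ring⟩⟩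

theorem exists_int_eq_of_num (v : K) (n : ℕ) : ∃ z : ℤ, (of v).nums n = z := by
  rw [num_eq_conts_a, nth_cont_eq_succ_nth_contAux]
  exact (exists_int_eq_of_contsAux v (n + 1)).1

variable [IsStrictOrderedRing K] {v : K} {n : ℕ}

theorem exists_nat_eq_of_den (v : K) (n : ℕ) : ∃ m : ℕ, (of v).dens n = m := by
  obtain ⟨z, hz⟩ : ∃ z : ℤ, (of v).dens n = z := by
    rw [den_eq_conts_b, nth_cont_eq_succ_nth_contAux]
    exact (exists_int_eq_of_contsAux v (n + 1)).2
  lift z to ℕ using (by exact_mod_cast hz ▸ zero_le_of_den)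
  exact ⟨z, mod_cast hz⟩

theorem of_den_monotone : Monotone (of v).dens :=
  monotone_nat_of_le_succ fun _ => of_den_mono

theorem one_le_of_den : 1 ≤ (of v).dens n :=
  zeroth_den_eq_one (g := of v) ▸ of_den_monotone n.zero_le

theorem of_den_succ_lt (h : ¬(of v).TerminatedAt (n + 1)) :
    (of v).dens (n + 1) < (of v).dens (n + 2) := by
  obtain ⟨gp, hs⟩ := Option.ne_none_iff_exists'.1 h
  have ha : gp.a = 1 := (of_partNum_eq_one_and_exists_int_partDen_eq hs).1
  have hb : 1 ≤ gp.b := of_one_le_get?_partDen (partDen_eq_s_b hs)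
  rw [dens_recurrence hs rfl rfl, ha]
  nlinarith [one_le_of_den (v := v) (n := n), one_le_of_den (v := v) (n := n + 1)]

theorem of_den_strictMonoOn (h : ¬(of v).Terminates) :
    StrictMonoOn (of v).dens (Set.Ici 1) :=
  strictMonoOn_Ici_of_pred_lt fun m hm => by
    obtain ⟨k, rfl⟩ : ∃ k, m = k + 2 := ⟨m - 2, by omega⟩
    exact of_den_succ_lt fun hk => h ⟨_, hk⟩

theorem tendsto_of_den_atTop [Archimedean K] (h : ¬(of v).Terminates) :
    Tendsto (fun n => (of v).dens n) atTop atTop := by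
  rw [← tendsto_add_atTop_iff_nat 1]
  exact tendsto_atTop_mono (fun n => succ_nth_fib_le_of_nth_den (Or.inr fun hn => h ⟨_, hn⟩))
    (tendsto_natCast_atTop_atTop.comp Nat.fib_add_two_strictMono.tendsto_atTop)

end

theorem abs_sub_convs_lt_one_div_den_rpow {x σ : ℝ} {n : ℕ} (h : ¬(of x).TerminatedAt n)
    (hgap : (of x).dens n ^ (σ - 1) < (of x).dens (n + 1)) :
    |x - (of x).convs n| < 1 / (of x).dens n ^ σ := by
  have hpos : 0 < (of x).dens n := zero_lt_one.trans_le one_le_of_den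
  have hrpow : (of x).dens n ^ σ < (of x).dens n * (of x).dens (n + 1) := by
    rw [← div_lt_iff₀' hpos, ← Real.rpow_sub_one hpos.ne']
    exact hgap
  calc |x - (of x).convs n| ≤ 1 / ((of x).dens n * (of x).dens (n + 1)) := abs_sub_convs_le h
    _ < 1 / (of x).dens n ^ σ := one_div_lt_one_div_of_lt (by positivity) hrpow

end GenContFract

open GenContFract

theorem Irrational.not_terminates_of {x : ℝ} (hx : Irrational x) : ¬(of x).Terminates :=
  fun h => let ⟨q, hq⟩ := (terminates_iff_rat x).1 h; hx ⟨q, hq.symm⟩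

theorem WellApprox.coe_le_exactOrder {σ x : ℝ} (h : WellApprox σ x) :
    (σ : EReal) ≤ exactOrder x :=
  le_sSup (Set.mem_image_of_mem _ h)

theorem eventually_den_succ_le_rpow_of_not_wellApprox {x σ : ℝ} (hx : Irrational x)
    (hσ : ¬WellApprox σ x) :
    ∀ᶠ n in atTop, (of x).dens (n + 1) ≤ (of x).dens n ^ (σ - 1) := by
  rw [← Nat.cofinite_eq_atTop, eventually_cofinite]
  set S := {n | ¬(of x).dens (n + 1) ≤ (of x).dens n ^ (σ - 1)}
  set A := {pq : ℤ × ℕ | 0 < pq.2 ∧ |x - (pq.1 : ℝ) / (pq.2 : ℝ)| < 1 / (pq.2 : ℝ) ^ σ}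
  have hA : A.Finite := Set.not_infinite.1 fun h => hσ ⟨hx, h⟩
  choose p hp using exists_int_eq_of_num x
  choose q hq using exists_nat_eq_of_den x
  have hmaps : Set.MapsTo (fun n => (p n, q n)) S A := fun n hn => by
    have happrox := abs_sub_convs_lt_one_div_den_rpow (fun h => hx.not_terminates_of ⟨n, h⟩)
      (not_le.1 hn)
    rw [conv_eq_num_div_den, hp, hq] at happrox
    refine ⟨?_, happrox⟩
    exact_mod_cast (hq n ▸ one_le_of_den : (1 : ℝ) ≤ q n)
  -- `q₀ = q₁` when `a₁ = 1`, so the denominators are injective only away from `0`.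
  have hinj : Set.InjOn (fun n => (p n, q n)) (S \ {0}) := fun a ha b hb hab => by
    refine (of_den_strictMonoOn hx.not_terminates_of).injOn ?_ ?_ ?_
    · exact Nat.one_le_iff_ne_zero.2 ha.2
    · exact Nat.one_le_iff_ne_zero.2 hb.2
    · rw [hq, hq, (Prod.mk.inj hab).2]
  exact ((hA.subset ((hmaps.mono_left Set.sdiff_subset).image_subset)).of_finite_image
    hinj).of_sdiff (Set.finite_singleton 0)

theorem eventually_exists_mem_Icc_rpow {a : ℕ → ℝ} {r : ℝ} (hr : 0 ≤ r) (ha : ∀ n, 0 ≤ a n)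
    (hmono : Monotone a) (htop : Tendsto a atTop atTop)
    (hgap : ∀ᶠ n in atTop, a (n + 1) ≤ a n ^ r) :
    ∀ᶠ q in atTop, ∃ n, a n ∈ Set.Icc q (q ^ r) := by
  classical
  obtain ⟨N, hN⟩ := eventually_atTop.1 hgap
  filter_upwards [eventually_gt_atTop (a N)] with q hq
  have hex : ∃ n, q ≤ a n := (htop.eventually_ge_atTop q).exists
  have hqn : q ≤ a (Nat.find hex) := Nat.find_spec hex
  have hNn : N < Nat.find hex := by
    by_contra! hnN
    exact (hq.trans_le hqn).not_ge (hmono hnN)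
  obtain ⟨k, hk⟩ : ∃ k, Nat.find hex = k + 1 := Nat.exists_eq_add_one.2 (by omega)
  have hkq : a k < q := not_le.1 (Nat.find_min hex (by omega))
  refine ⟨k + 1, hk ▸ hqn, ?_⟩
  calc a (k + 1) ≤ a k ^ r := hN k (by omega)
    _ ≤ q ^ r := Real.rpow_le_rpow (ha k) hkq.le hr

/-- For `x ∈ E(τ)` and any `ε > 0`, every interval `[q, q^{τ+ε-1}]` with `q`
sufficiently large contains the denominator of some convergent of the continued
fraction expansion of `x`. -/
theorem denom_of_convergent_in_interval (τ : ℝ) (hτ : 2 ≤ τ) (x : ℝ)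
    (hx : MemExactE τ x) (ε : ℝ) (hε : 0 < ε) :
    ∃ Q₀ : ℝ, ∀ q : ℝ, Q₀ ≤ q →
      ∃ n : ℕ, (GenContFract.of x).dens n ∈ Set.Icc q (q ^ (τ + ε - 1)) := by
  obtain ⟨hirr, hord⟩ := hx
  have hnot : ¬WellApprox (τ + ε) x := fun h => by
    have hle := h.coe_le_exactOrder
    rw [hord, EReal.coe_le_coe_iff] at hle
    linarith
  exact eventually_atTop.1 <| eventually_exists_mem_Icc_rpow (by linarith)
    (fun _ => zero_le_of_den) of_den_monotone (tendsto_of_den_atTop hirr.not_terminates_of)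
    (eventually_den_succ_le_rpow_of_not_wellApprox hirr hnot)
end
end

section
/- Let α, β be irrational and (x_n)_{n≥0} an αβ orbit with difference sequence ω. Suppose that for every C > 1 there exist infinitely many N ∈ ℕ such that either |ω|_{α,N} ≥ C·|ω|_{β,N} or |ω|_{β,N} ≥ C·|ω|_{α,N}. Then {x_n : n ≥ 0} is dense in 𝕋. -/
noncomputable section

/-- The unit circle `ℝ/ℤ`. -/
abbrev Circle1 : Type := AddCircle (1 : ℝ)

/-- `(x_n)_{n≥0}` is an `αβ` orbit on the circle: each step adds `α` or `β` (mod 1). -/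
def IsABOrbit (α β : ℝ) (x : ℕ → Circle1) : Prop :=
  ∀ n : ℕ, x (n + 1) = x n + (α : Circle1) ∨ x (n + 1) = x n + (β : Circle1)

/-- `ω` is the difference sequence of the `αβ` orbit `(x_n)`: for every `n ≥ 1`,
`ω n ∈ {α, β}` and `x_n - x_{n-1} = ω_n` (mod 1). -/
def IsDiffSeq (α β : ℝ) (x : ℕ → Circle1) (ω : ℕ → ℝ) : Prop :=
  ∀ n : ℕ, 1 ≤ n → (ω n = α ∨ ω n = β) ∧ x n = x (n - 1) + ((ω n : ℝ) : Circle1)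

/-- `|ω|_{γ,N}`: the number of `1 ≤ n ≤ N` with `ω n = γ`. -/
def countIn (ω : ℕ → ℝ) (γ : ℝ) (N : ℕ) : ℕ :=
  Set.ncard {n : ℕ | 1 ≤ n ∧ n ≤ N ∧ ω n = γ}

/-!
If, say, `|ω|_{α,N} ≥ 2K·|ω|_{β,N}` with `N ≥ K`, then by pigeonhole the first `N` steps contain
`K` consecutive `α`-steps, along which the orbit is a piece `w, w + α, …, w + (K-1)α` of an
irrational rotation orbit. By density of `ℤα` and compactness of the circle, for `K` large every
such piece is `ε`-dense, whatever `w` is.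
-/

open Filter Finset

instance : Fact ((0 : ℝ) < 1) := ⟨one_pos⟩

theorem eventually_forall_exists_nsmul_dist_lt {G : Type*} [SeminormedAddCommGroup G]
    [CompactSpace G] {g : G} (hg : DenseRange (· • g : ℤ → G)) {ε : ℝ} (hε : 0 < ε) :
    ∀ᶠ K : ℕ in atTop, ∀ w z : G, ∃ j < K, dist z (w + j • g) < ε := by
  obtain ⟨t, ht⟩ := isCompact_univ.elim_finite_subcover (fun j : ℤ => Metric.ball (j • g) ε)
    (fun _ => Metric.isOpen_ball) fun y _ => Set.mem_iUnion.2 (hg.exists_dist_lt y hε)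
  set M := t.sup Int.natAbs
  filter_upwards [eventually_gt_atTop (2 * M)] with K hK w z
  -- shifting by `M • g` turns the integer multiples `j • g`, `|j| ≤ M`, into natural ones
  obtain ⟨j, hjt, hj⟩ := Set.mem_iUnion₂.1 (ht (Set.mem_univ (z - w - (M : ℤ) • g)))
  have hjM : j.natAbs ≤ M := Finset.le_sup (f := Int.natAbs) hjt
  have hjM' : ((j + M).toNat : ℤ) = j + M := Int.toNat_of_nonneg (by omega)
  refine ⟨(j + M).toNat, by omega, ?_⟩
  rw [Metric.mem_ball, dist_eq_norm] at hj
  rw [dist_eq_norm, ← natCast_zsmul, hjM', add_zsmul]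
  convert hj using 2
  abel

theorem exists_forall_of_card_filter_not_le {P : ℕ → Prop} [DecidablePred P] {N K b : ℕ}
    (hbad : #{n ∈ Icc 1 N | ¬ P n} ≤ b) (hN : K * (b + 1) ≤ N) :
    ∃ m, ∀ j ∈ Icc 1 K, P (m + j) := by
  by_contra! hcon
  choose g hg hgP using hcon
  -- the `b + 1` disjoint blocks `[iK + 1, iK + K]`, `i ≤ b`, each contain a failure of `P`
  set f : ℕ → ℕ := fun i => i * K + g (i * K)
  have hf : ∀ i, i * K + 1 ≤ f i ∧ f i ≤ i * K + K := fun i => by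
    have := mem_Icc.1 (hg (i * K))
    simp only [f]
    omega
  have hmono : StrictMono f := strictMono_nat_of_lt_succ fun i => by
    have hi := hf i
    have hi' := hf (i + 1)
    rw [add_one_mul] at hi'
    omega
  have hmaps : ∀ i ∈ range (b + 1), f i ∈ ({n ∈ Icc 1 N | ¬ P n} : Finset ℕ) := fun i hi => by
    have hiK : i * K + K ≤ N :=
      le_trans (by rw [← add_one_mul, mul_comm]; exact Nat.mul_le_mul_left K (mem_range.1 hi)) hN
    have hfi := hf i
    exact mem_filter.2 ⟨mem_Icc.2 ⟨by omega, by omega⟩, hgP (i * K)⟩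
  have hcard := card_le_card_of_injOn f hmaps hmono.injective.injOn
  rw [card_range] at hcard
  omega

theorem eq_add_nsmul_of_succ_eq_add {M : Type*} [AddMonoid M] {x : ℕ → M} {c : M} {m K : ℕ}
    (h : ∀ j < K, x (m + j + 1) = x (m + j) + c) : ∀ j ≤ K, x (m + j) = x m + j • c := by
  intro j hj
  induction j with
  | zero => simp
  | succ j ih => rw [← add_assoc, h j hj, ih (by omega), succ_nsmul, add_assoc]

theorem countIn_eq_card (ω : ℕ → ℝ) (γ : ℝ) (N : ℕ) :
    countIn ω γ N = #{n ∈ Icc 1 N | ω n = γ} := by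
  rw [countIn, ← Set.ncard_coe_finset]
  congr 1
  ext n
  simp [and_assoc]

theorem countIn_le (ω : ℕ → ℝ) (γ : ℝ) (N : ℕ) : countIn ω γ N ≤ N := by
  rw [countIn_eq_card]
  exact (card_filter_le _ _).trans (Nat.card_Icc 1 N).le

namespace IsDiffSeq

variable {γ δ : ℝ} {x : ℕ → Circle1} {ω : ℕ → ℝ}

theorem symm (hω : IsDiffSeq γ δ x ω) : IsDiffSeq δ γ x ω :=
  fun n hn => ⟨(hω n hn).1.symm, (hω n hn).2⟩

theorem card_filter_ne_le_countIn (hω : IsDiffSeq γ δ x ω) (N : ℕ) :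
    #{n ∈ Icc 1 N | ω n ≠ γ} ≤ countIn ω δ N := by
  rw [countIn_eq_card]
  refine card_le_card (monotone_filter_right _ fun n hn hne => ?_)
  exact (hω n (mem_Icc.1 hn).1).1.resolve_left hne

theorem exists_run {K N : ℕ} (hω : IsDiffSeq γ δ x ω) (hKN : K ≤ N)
    (hcount : (2 * K : ℝ) * countIn ω δ N ≤ countIn ω γ N) :
    ∃ m, ∀ j ∈ Icc 1 K, ω (m + j) = γ := by
  have hcount' : 2 * K * countIn ω δ N ≤ countIn ω γ N := by exact_mod_cast hcount
  have hγN := countIn_le ω γ N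
  refine exists_forall_of_card_filter_not_le (hω.card_filter_ne_le_countIn N) ?_
  rcases Nat.eq_zero_or_pos (countIn ω δ N) with hb | hb
  · simpa [hb] using hKN
  · nlinarith

theorem exists_mem_ball_inter_range {K N : ℕ} {z : Circle1} {ε : ℝ}
    (hω : IsDiffSeq γ δ x ω) (hKN : K ≤ N)
    (hcount : (2 * K : ℝ) * countIn ω δ N ≤ countIn ω γ N)
    (hnet : ∀ w z : Circle1, ∃ j < K, dist z (w + j • (γ : Circle1)) < ε) :
    (Metric.ball z ε ∩ Set.range x).Nonempty := by
  obtain ⟨m, hm⟩ := hω.exists_run hKN hcount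
  have hrun : ∀ j ≤ K, x (m + j) = x m + j • (γ : Circle1) := eq_add_nsmul_of_succ_eq_add fun j hj => by
    have hstep := (hω (m + j + 1) (by omega)).2
    rwa [Nat.add_sub_cancel, add_assoc, hm (j + 1) (mem_Icc.2 ⟨by omega, hj⟩)] at hstep
  obtain ⟨j, hjK, hj⟩ := hnet (x m) z
  exact ⟨x (m + j), Metric.mem_ball.2 (by rwa [hrun j hjK.le, dist_comm]), j + m, by rw [add_comm]⟩

end IsDiffSeq

theorem dense_of_not_comparable_general (α β : ℝ) (hα : Irrational α) (hβ : Irrational β)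
    (x : ℕ → Circle1) (ω : ℕ → ℝ) (hω : IsDiffSeq α β x ω)
    (h : ∀ C : ℝ, 1 < C →
      {N : ℕ | C * (countIn ω β N : ℝ) ≤ (countIn ω α N : ℝ) ∨
        C * (countIn ω α N : ℝ) ≤ (countIn ω β N : ℝ)}.Infinite) :
    Dense (Set.range x) := by
  rw [Metric.dense_iff]
  intro z ε hε
  have hnet {γ : ℝ} (hγ : Irrational γ) :=
    eventually_forall_exists_nsmul_dist_lt
      (AddCircle.denseRange_zsmul_coe_iff.2 (by rwa [div_one])) hε (g := (γ : Circle1))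
  obtain ⟨K, hK, hKα, hKβ⟩ :=
    ((eventually_gt_atTop 0).and ((hnet hα).and (hnet hβ))).exists
  have hC : (1 : ℝ) < 2 * K := by
    have : (1 : ℝ) ≤ K := by exact_mod_cast hK
    linarith
  obtain ⟨N, hN, hKN⟩ := (h (2 * K) hC).exists_gt K
  rcases hN with hN | hN
  · exact hω.exists_mem_ball_inter_range hKN.le hN hKα
  · exact hω.symm.exists_mem_ball_inter_range hKN.le hN hKβ

theorem dense_of_not_comparable (α β : ℝ) (hα : Irrational α) (hβ : Irrational β)
    (x : ℕ → Circle1) (ω : ℕ → ℝ) (hx : IsABOrbit α β x) (hω : IsDiffSeq α β x ω)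
    (h : ∀ C : ℝ, 1 < C →
      {N : ℕ | C * (countIn ω β N : ℝ) ≤ (countIn ω α N : ℝ) ∨
        C * (countIn ω α N : ℝ) ≤ (countIn ω β N : ℝ)}.Infinite) :
    Dense (Set.range x) :=
  dense_of_not_comparable_general α β hα hβ x ω hω h
end
end
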